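/- Let G be a connected graph with a tree decomposition in which every bag has G-diameter at most τ (i.e., treelength at most τ). Fix a root s and BFS layers L_j. Then every part of the layering tree of G with respect to s has G-diameter at most 3τ. -/

import Mathlib

/-- `ReachWithin G S u v`: there is a `u`-`v` walk in `G` all of whose vertices lie in `S`. -/
def ReachWithin {V : Type*} (G : SimpleGraph V) (S : Set V) (u v : V) : Prop :=
  ∃ p : G.Walk u v, ∀ x ∈ p.support, x ∈ S

/-- A tree decomposition of `G` over a tree `T`: bags cover all vertices and all edges,
and for every vertex `v` the bags containing `v` form a subtree (whenever `v` lies in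
the bags of `t` and `t''`, it lies in the bag of every node on the path between them). -/
structure TreeDecomp {V ι : Type*} (G : SimpleGraph V) (T : SimpleGraph ι) where
  bag : ι → Set V
  covers_vertex : ∀ v : V, ∃ t, v ∈ bag t
  covers_edge : ∀ ⦃u v : V⦄, G.Adj u v → ∃ t, u ∈ bag t ∧ v ∈ bag t
  subtree : ∀ (v : V) (t t'' : ι), v ∈ bag t → v ∈ bag t'' →
    ∀ (p : T.Walk t t''), p.IsPath → ∀ t' ∈ p.support, v ∈ bag t'

/-!
Put `s`, `a`, `b` into bags at tree nodes `ts`, `ta`, `tb` and let `m` be the median of these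
three nodes. The bag of `m` separates any two of `s`, `a`, `b`, so it contains a vertex `x` of a
geodesic from `s` to `a`, a vertex `y` of a geodesic from `s` to `b`, and a vertex `z` of a walk
from `a` to `b` that stays in the layers `≥ k`. From `d(s,x) + d(x,a) = k ≤ d(s,z)` we get
`d(x,a) ≤ d(x,z) ≤ τ`, likewise `d(y,b) ≤ τ`, and `d(x,y) ≤ τ`, whence `d(a,b) ≤ 3τ`.
-/

namespace ReachWithin

variable {V : Type*} {G : SimpleGraph V} {S S' : Set V} {u v w : V}

lemma mono (hS : S ⊆ S') (h : ReachWithin G S u v) : ReachWithin G S' u v :=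
  let ⟨p, hp⟩ := h
  ⟨p, fun x hx => hS (hp x hx)⟩

lemma trans (h₁ : ReachWithin G S u v) (h₂ : ReachWithin G S v w) : ReachWithin G S u w := by
  obtain ⟨p, hp⟩ := h₁
  obtain ⟨q, hq⟩ := h₂
  refine ⟨p.append q, fun x hx => ?_⟩
  rcases (SimpleGraph.Walk.mem_support_append_iff p q).1 hx with hx | hx
  exacts [hp x hx, hq x hx]

end ReachWithin

namespace SimpleGraph

variable {V : Type*} {G : SimpleGraph V}

lemma Walk.exists_append_eq_of_first_mem {S : Set V} {x y : V} (w : G.Walk x y) (hy : y ∈ S) :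
    ∃ m ∈ S, ∃ (w₁ : G.Walk x m) (w₂ : G.Walk m y),
      w₁.append w₂ = w ∧ ∀ z ∈ w₁.support, z ∈ S → z = m := by
  induction w with
  | nil => exact ⟨_, hy, nil, nil, rfl, fun z hz _ => by simpa using hz⟩
  | @cons a _ _ h w ih =>
    by_cases ha : a ∈ S
    · exact ⟨a, ha, nil, cons h w, rfl, fun z hz _ => by simpa using hz⟩
    obtain ⟨m, hm, w₁, w₂, rfl, hfirst⟩ := ih hy
    refine ⟨m, hm, cons h w₁, w₂, rfl, fun z hz hzS => ?_⟩
    rcases List.mem_cons.1 (support_cons h w₁ ▸ hz) with rfl | hz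
    exacts [absurd hzS ha, hfirst z hz hzS]

lemma IsAcyclic.mem_support_of_isPath (hG : G.IsAcyclic) {u v m : V} {p : G.Walk u v}
    (hp : p.IsPath) (hm : m ∈ p.support) (w : G.Walk u v) : m ∈ w.support := by
  classical
  have hpw : (⟨p, hp⟩ : G.Path u v) = w.toPath := (hG.subsingleton_path u v).elim _ _
  exact w.support_toPath_subset_support (hpw ▸ hm)

theorem IsTree.exists_median (hG : G.IsTree) (u v w : V) :
    ∃ m, (∀ p : G.Walk u v, m ∈ p.support) ∧ (∀ p : G.Walk u w, m ∈ p.support) ∧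
      (∀ p : G.Walk v w, m ∈ p.support) := by
  classical
  obtain ⟨q, hq⟩ := (hG.connected u v).exists_isPath
  obtain ⟨p, hp⟩ := (hG.connected v w).exists_isPath
  obtain ⟨m, hmp, q₁, q₂, rfl, hfirst⟩ :=
    q.exists_append_eq_of_first_mem (S := {z | z ∈ p.support}) p.start_mem_support
  -- `m` is the first vertex of `q` on `p`, so going along `q` to `m` and then along `p` is a path.
  have hr : (q₁.append (p.dropUntil m hmp)).IsPath := by
    have hd := hp.dropUntil hmp
    rw [Walk.isPath_def, Walk.support_append]
    refine hq.of_append_left.support_nodup.append hd.support_nodup.tail fun z hz₁ hz₂ => ?_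
    obtain rfl := hfirst z hz₁ (p.support_dropUntil_subset_support hmp (List.mem_of_mem_tail hz₂))
    have hnd := hd.support_nodup
    rw [← Walk.cons_tail_support] at hnd
    exact (List.nodup_cons.1 hnd).1 hz₂
  exact ⟨m, hG.isAcyclic.mem_support_of_isPath hq (Walk.mem_support_append_iff _ _ |>.2
      (.inr q₂.start_mem_support)),
    hG.isAcyclic.mem_support_of_isPath hr (Walk.mem_support_append_iff _ _ |>.2
      (.inl q₁.end_mem_support)),
    hG.isAcyclic.mem_support_of_isPath hp hmp⟩

theorem Connected.dist_le_of_mem_geodesic (hG : G.Connected) {s a x z : V} (Q : G.Walk s a)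
    (hQ : Q.length = G.dist s a) (hx : x ∈ Q.support) (hz : G.dist s a ≤ G.dist s z) :
    G.dist x a ≤ G.dist x z := by
  classical
  have hsplit : G.dist s x + G.dist x a ≤ G.dist s a := by
    rw [← hQ, ← Q.take_spec hx, Walk.length_append]
    exact add_le_add (dist_le _) (dist_le _)
  have := hG.dist_triangle (u := s) (v := x) (w := z)
  omega

end SimpleGraph

namespace TreeDecomp

open SimpleGraph

variable {V ι : Type*} {G : SimpleGraph V} {T : SimpleGraph ι} (td : TreeDecomp G T)

lemma reachWithin_of_mem_bag (hT : T.Preconnected) {v : V} {t t' : ι} (ht : v ∈ td.bag t)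
    (ht' : v ∈ td.bag t') : ReachWithin T {i | v ∈ td.bag i} t t' := by
  classical
  obtain ⟨p⟩ := hT t t'
  exact ⟨p.toPath, td.subtree v t t' ht ht' _ p.toPath.2⟩

lemma reachWithin_of_reachWithin (hT : T.Preconnected) {S : Set V} {u v : V}
    (h : ReachWithin G S u v) {t t' : ι} (hu : u ∈ td.bag t) (hv : v ∈ td.bag t') :
    ReachWithin T {i | ∃ x ∈ S, x ∈ td.bag i} t t' := by
  obtain ⟨w, hw⟩ := h
  induction w generalizing t with
  | nil =>
    exact (td.reachWithin_of_mem_bag hT hu hv).mono fun i hi => ⟨_, hw _ (by simp), hi⟩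
  | @cons u u' v hadj w ih =>
    obtain ⟨t'', hu'', hu'⟩ := td.covers_edge hadj
    refine ReachWithin.trans ?_ (ih hu' hv fun x hx => hw x (by simp [hx]))
    exact (td.reachWithin_of_mem_bag hT hu hu'').mono fun i hi => ⟨u, hw u (by simp), hi⟩

theorem exists_mem_support_mem_bag (hT : T.Preconnected) {t t' m : ι}
    (hm : ∀ W : T.Walk t t', m ∈ W.support) {u v : V} (hu : u ∈ td.bag t) (hv : v ∈ td.bag t')
    (w : G.Walk u v) : ∃ x ∈ w.support, x ∈ td.bag m := by
  obtain ⟨W, hW⟩ := td.reachWithin_of_reachWithin hT (S := {x | x ∈ w.support}) ⟨w, fun _ => id⟩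
    hu hv
  exact hW m (hm W)

end TreeDecomp

/-- If `G` admits a tree decomposition in which every bag has `G`-diameter at most `τ`
(treelength at most `τ`), then every part of the BFS layering of `G` from any root `s`
has `G`-diameter at most `3τ`. -/
theorem part_diameter_le_three_treelength {V ι : Type*} (G : SimpleGraph V)
    (hconn : G.Connected) (T : SimpleGraph ι) (hT : T.Connected) (hTa : T.IsAcyclic)
    (td : TreeDecomp G T) (τ : ℕ)
    (hτ : ∀ t, ∀ u ∈ td.bag t, ∀ v ∈ td.bag t, G.dist u v ≤ τ)
    (s : V) (k : ℕ) (a b : V) (ha : G.dist s a = k) (hb : G.dist s b = k)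
    (hab : ReachWithin G {x | k ≤ G.dist s x} a b) :
    G.dist a b ≤ 3 * τ := by
  obtain ⟨ts, hts⟩ := td.covers_vertex s
  obtain ⟨ta, hta⟩ := td.covers_vertex a
  obtain ⟨tb, htb⟩ := td.covers_vertex b
  obtain ⟨m, hsa, hsb, hab_m⟩ := SimpleGraph.IsTree.exists_median ⟨hT, hTa⟩ ts ta tb
  obtain ⟨Q, hQ⟩ := hconn.exists_walk_length_eq_dist s a
  obtain ⟨R, hR⟩ := hconn.exists_walk_length_eq_dist s b
  obtain ⟨w, hw⟩ := hab
  obtain ⟨x, hxQ, hxm⟩ := td.exists_mem_support_mem_bag hT.preconnected hsa hts hta Q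
  obtain ⟨y, hyR, hym⟩ := td.exists_mem_support_mem_bag hT.preconnected hsb hts htb R
  obtain ⟨z, hzw, hzm⟩ := td.exists_mem_support_mem_bag hT.preconnected hab_m hta htb w
  have hxa : G.dist x a ≤ τ :=
    (hconn.dist_le_of_mem_geodesic Q hQ hxQ (ha ▸ hw z hzw)).trans (hτ m x hxm z hzm)
  have hyb : G.dist y b ≤ τ :=
    (hconn.dist_le_of_mem_geodesic R hR hyR (hb ▸ hw z hzw)).trans (hτ m y hym z hzm)
  calc G.dist a b ≤ G.dist a x + G.dist x b := hconn.dist_triangle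
    _ ≤ G.dist x a + (G.dist x y + G.dist y b) := by
        rw [G.dist_comm]
        exact add_le_add_right hconn.dist_triangle _
    _ ≤ τ + (τ + τ) := add_le_add hxa (add_le_add (hτ m x hxm y hym) hyb)
    _ = 3 * τ := by ring
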